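/- arXiv:0708.1909 — 4 statements merged into one kernel-verified Lean document; each statement's English description precedes it below -/
import Mathlib

section
/- Let P = ⟨p_1,…,p_k⟩ and Q = ⟨q_1,…,q_k⟩ be polygonal curves with k vertices each in ℝ^d, and let r > 0. Suppose ‖p_i − q_i‖ ≤ r for all i, and suppose that for all i ≠ j we have ‖p_i − q_j‖ > r (vertices of P and Q with different indices are far apart). Then every coupling realizing discrete Fréchet distance at most r couples p_i only with q_i; in particular d_dF(P,Q) = max_i ‖p_i − q_i‖. -/
open Real

noncomputable section

abbrev Pt (d : ℕ) := EuclideanSpace ℝ (Fin d)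

/-- One step of a coupling: advance the first and/or the second index by exactly 1. -/
def CouplingStep (a b : ℕ × ℕ) : Prop :=
  (b.1 = a.1 + 1 ∧ b.2 = a.2) ∨ (b.1 = a.1 ∧ b.2 = a.2 + 1) ∨
    (b.1 = a.1 + 1 ∧ b.2 = a.2 + 1)

/-- A coupling between a curve with `k` vertices and one with `l` vertices
(0-based indices): starts at `(0,0)`, ends at `(k-1, l-1)`, monotone unit steps. -/
def IsCoupling (k l : ℕ) (c : List (ℕ × ℕ)) : Prop :=
  c.head? = some (0, 0) ∧ c.getLast? = some (k - 1, l - 1) ∧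
    c.Chain' CouplingStep ∧ ∀ ij ∈ c, ij.1 < k ∧ ij.2 < l

/-- The maximum distance over the coupled pairs of a coupling. -/
def couplingCost {d : ℕ} (P Q : List (Pt d)) (c : List (ℕ × ℕ)) : ℝ :=
  c.foldr (fun ij acc => max (dist (P.getD ij.1 0) (Q.getD ij.2 0)) acc) 0

/-- The discrete Fréchet distance between two polygonal curves, given as lists
of their vertices. -/
def dDF {d : ℕ} (P Q : List (Pt d)) : ℝ :=
  sInf { m : ℝ | ∃ c, IsCoupling P.length Q.length c ∧ m = couplingCost P Q c }

/-- The set of nearest neighbors of a query curve `Q` in a finite set `S` of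
curves, under the discrete Fréchet distance. -/
def NN {d : ℕ} (S : Finset (List (Pt d))) (Q : List (Pt d)) : Set (List (Pt d)) :=
  { P | P ∈ S ∧ ∀ P' ∈ S, dDF Q P ≤ dDF Q P' }

/-- The point of `ℝ²` with given coordinates. -/
def e2 (x y : ℝ) : Pt 2 := (WithLp.equiv 2 (Fin 2 → ℝ)).symm ![x, y]

/-- The point of `ℝ¹` with given coordinate. -/
def e1 (x : ℝ) : Pt 1 := (WithLp.equiv 2 (Fin 1 → ℝ)).symm ![x]

/-!
A coupling of cost at most `r` can only pair vertices with equal indices, since all other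
pairs are more than `r` apart. The first index of a coupling runs through `0, …, k-1` in steps
of at most one, so such a coupling contains every diagonal pair `(i, i)` and costs at least
`max_i ‖p_i - q_i‖`; every other coupling costs more than `r ≥ max_i ‖p_i - q_i‖`. The diagonal
coupling attains the maximum.
-/

theorem List.mem_of_isChain_le_succ {l : List ℕ} (hl : l.IsChain fun a b => b ≤ a + 1)
    {a b m : ℕ} (ha : l.head? = some a) (hb : l.getLast? = some b) (ham : a ≤ m)
    (hmb : m ≤ b) : m ∈ l := by
  induction l generalizing a with
  | nil => simp at ha
  | cons x t ih =>
    obtain rfl : x = a := by simpa using ha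
    rcases ham.eq_or_lt with rfl | hxm
    · exact List.mem_cons_self
    cases t with
    | nil =>
      obtain rfl : x = b := by simpa using hb
      omega
    | cons y s =>
      rw [List.isChain_cons_cons] at hl
      rw [List.getLast?_cons_cons] at hb
      exact List.mem_cons_of_mem _ (ih hl.2 rfl hb (by omega))

section couplingCost

variable {d : ℕ} (P Q : List (Pt d)) {c : List (ℕ × ℕ)}

theorem le_couplingCost {ij : ℕ × ℕ} (h : ij ∈ c) :
    dist (P.getD ij.1 0) (Q.getD ij.2 0) ≤ couplingCost P Q c := by
  induction c with
  | nil => simp at h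
  | cons a t ih =>
    rcases List.mem_cons.mp h with rfl | h
    · exact le_max_left _ _
    · exact (ih h).trans (le_max_right _ _)

theorem couplingCost_le {m : ℝ} (hm : 0 ≤ m)
    (h : ∀ ij ∈ c, dist (P.getD ij.1 0) (Q.getD ij.2 0) ≤ m) : couplingCost P Q c ≤ m := by
  induction c with
  | nil => exact hm
  | cons a t ih =>
    exact max_le (h a List.mem_cons_self) (ih fun ij hij => h ij (List.mem_cons_of_mem _ hij))

end couplingCost

theorem IsCoupling.exists_mem_fst_eq {k l : ℕ} {c : List (ℕ × ℕ)} (hc : IsCoupling k l c)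
    {i : ℕ} (hi : i < k) : ∃ ij ∈ c, ij.1 = i := by
  obtain ⟨hhead, hlast, hchain, -⟩ := hc
  have hfst : (c.map Prod.fst).IsChain fun a b => b ≤ a + 1 := by
    refine List.isChain_map_of_isChain _ (fun a b hab => ?_) hchain
    rcases hab with ⟨h, -⟩ | ⟨h, -⟩ | ⟨h, -⟩ <;> omega
  have hmem : i ∈ c.map Prod.fst :=
    List.mem_of_isChain_le_succ hfst (a := 0) (b := k - 1) (by simp [List.head?_map, hhead])
      (by simp [List.getLast?_map, hlast]) (Nat.zero_le i) (by omega)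
  simpa using hmem

theorem IsCoupling.mem_of_forall_eq {k : ℕ} {c : List (ℕ × ℕ)} (hc : IsCoupling k k c)
    (hdiag : ∀ ij ∈ c, ij.1 = ij.2) {i : ℕ} (hi : i < k) : (i, i) ∈ c := by
  obtain ⟨⟨a, b⟩, hab, rfl⟩ := hc.exists_mem_fst_eq hi
  obtain rfl : a = b := hdiag _ hab
  exact hab

theorem List.getD_ofFn {α : Type*} {k : ℕ} (f : Fin k → α) (x : α) {i : ℕ} (hi : i < k) :
    (List.ofFn f).getD i x = f ⟨i, hi⟩ := by
  rw [List.getD_eq_getElem _ _ (by simpa using hi), List.getElem_ofFn]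

section separated

variable {d k : ℕ} {P Q : Fin k → Pt d} {c : List (ℕ × ℕ)}

theorem IsCoupling.fst_eq_snd_of_couplingCost_le {r : ℝ} (hc : IsCoupling k k c)
    (hfar : ∀ i j, i ≠ j → r < dist (P i) (Q j))
    (hcost : couplingCost (List.ofFn P) (List.ofFn Q) c ≤ r) : ∀ ij ∈ c, ij.1 = ij.2 := by
  obtain ⟨-, -, -, hbounds⟩ := hc
  intro ij hij
  obtain ⟨h1, h2⟩ := hbounds ij hij
  by_contra hne
  have hle := (le_couplingCost (List.ofFn P) (List.ofFn Q) hij).trans hcost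
  rw [List.getD_ofFn _ _ h1, List.getD_ofFn _ _ h2] at hle
  exact hle.not_gt (hfar _ _ (by simpa [Fin.ext_iff] using hne))

theorem IsCoupling.iSup_dist_le_couplingCost [NeZero k] (hc : IsCoupling k k c)
    (hdiag : ∀ ij ∈ c, ij.1 = ij.2) :
    ⨆ i, dist (P i) (Q i) ≤ couplingCost (List.ofFn P) (List.ofFn Q) c := by
  refine ciSup_le fun i => ?_
  have := le_couplingCost (List.ofFn P) (List.ofFn Q) (hc.mem_of_forall_eq hdiag i.2)
  rwa [List.getD_ofFn _ _ i.2, List.getD_ofFn _ _ i.2] at this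

end separated

def diagCoupling (k : ℕ) : List (ℕ × ℕ) := (List.range k).map fun i => (i, i)

theorem isCoupling_diagCoupling {k : ℕ} (hk : 0 < k) : IsCoupling k k (diagCoupling k) := by
  obtain ⟨n, rfl⟩ := Nat.exists_eq_succ_of_ne_zero hk.ne'
  refine ⟨by simp [diagCoupling, List.range_succ_eq_map], by simp [diagCoupling, List.range_succ],
    ?_, by simp [diagCoupling]⟩
  rw [diagCoupling, List.Chain', List.isChain_map, List.isChain_range]
  intro m _
  simp [CouplingStep]

theorem couplingCost_diagCoupling {d k : ℕ} (hk : 0 < k) (P Q : Fin k → Pt d) :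
    couplingCost (List.ofFn P) (List.ofFn Q) (diagCoupling k) = ⨆ i, dist (P i) (Q i) := by
  have : NeZero k := ⟨hk.ne'⟩
  have hbdd := Finite.bddAbove_range fun i => dist (P i) (Q i)
  refine le_antisymm (couplingCost_le _ _ (dist_nonneg.trans (le_ciSup hbdd 0)) ?_)
    ((isCoupling_diagCoupling hk).iSup_dist_le_couplingCost (by simp [diagCoupling]))
  simp only [diagCoupling, List.mem_map, List.mem_range]
  rintro _ ⟨i, hi, rfl⟩
  rw [List.getD_ofFn _ _ hi, List.getD_ofFn _ _ hi]
  exact le_ciSup hbdd _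

theorem dDF_of_separated_general (d k : ℕ) (hk : 0 < k) (P Q : Fin k → Pt d) (r : ℝ)
    (hnear : ∀ i, dist (P i) (Q i) ≤ r)
    (hfar : ∀ i j, i ≠ j → r < dist (P i) (Q j)) :
    (∀ c, IsCoupling k k c → couplingCost (List.ofFn P) (List.ofFn Q) c ≤ r →
        ∀ ij ∈ c, ij.1 = ij.2) ∧
      dDF (List.ofFn P) (List.ofFn Q) = ⨆ i, dist (P i) (Q i) := by
  have : NeZero k := ⟨hk.ne'⟩
  have hdiag : ∀ c, IsCoupling k k c → couplingCost (List.ofFn P) (List.ofFn Q) c ≤ r →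
      ∀ ij ∈ c, ij.1 = ij.2 := fun c hc => hc.fst_eq_snd_of_couplingCost_le hfar
  refine ⟨hdiag, IsLeast.csInf_eq ⟨?_, ?_⟩⟩
  · rw [List.length_ofFn, List.length_ofFn]
    exact ⟨_, isCoupling_diagCoupling hk, (couplingCost_diagCoupling hk P Q).symm⟩
  · rintro _ ⟨c, hc, rfl⟩
    rw [List.length_ofFn, List.length_ofFn] at hc
    by_cases hcost : couplingCost (List.ofFn P) (List.ofFn Q) c ≤ r
    · exact hc.iSup_dist_le_couplingCost (hdiag c hc hcost)
    · exact (ciSup_le hnear).trans (le_of_not_ge hcost)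

/-- if corresponding vertices are within distance `r` but vertices
with different indices are at distance more than `r`, then every coupling
realizing cost at most `r` couples only equal indices, and the discrete Fréchet
distance equals the maximum distance over corresponding vertices. -/
theorem dDF_of_separated (d k : ℕ) (hk : 0 < k) (P Q : Fin k → Pt d) (r : ℝ)
    (hr : 0 < r)
    (hnear : ∀ i, dist (P i) (Q i) ≤ r)
    (hfar : ∀ i j, i ≠ j → r < dist (P i) (Q j)) :
    (∀ c, IsCoupling k k c → couplingCost (List.ofFn P) (List.ofFn Q) c ≤ r →
        ∀ ij ∈ c, ij.1 = ij.2) ∧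
      dDF (List.ofFn P) (List.ofFn Q) = ⨆ i, dist (P i) (Q i) :=
  dDF_of_separated_general d k hk P Q r hnear hfar
end
end

section
/- Let m > 2 and 0 < ε < r(1/cos(π/m) − 1) for some r > 0. Let p ∈ ℝ² and let a_1, …, a_m be m points evenly distributed on the circle of radius 2r centered at p (i.e., a_j = p + 2r·(cos(2πj/m), sin(2πj/m))). Then for any r' with r ≤ r' ≤ r + ε and any index j₀, there exists a point q ∈ ℝ² with ‖q − p‖ = r', ‖q − a_{j₀}‖ = r', and ‖q − a_j‖ > r' for all j ≠ j₀. -/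
open Real

noncomputable section

/-! Put `q = p + r' (cos (θ₀ + δ), sin (θ₀ + δ))`, where `θ₀ = 2π j₀ / m` and `cos δ = r / r'`.
By the law of cosines `‖q - a_j‖² = r'² + 4 r (r - r' cos (θ₀ + δ - θ_j))`, so `q` is at
distance `r'` from `a_{j₀}`. The bound on `ε` says `r' cos (π / m) < r`, hence `δ ≤ π / m`; for
`j ≠ j₀` the angle `θ₀ + δ - θ_j` then stays at distance at least `π / m` from `2πℤ`, so its cosine
is at most `cos (π / m) < r / r'` and `a_j` is farther than `r'` from `q`. -/

lemma norm_e2_sq (x y : ℝ) : ‖e2 x y‖ ^ 2 = x ^ 2 + y ^ 2 := by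
  simp [EuclideanSpace.norm_sq_eq, e2, Fin.sum_univ_two]

lemma norm_e2_cos_sin (θ : ℝ) : ‖e2 (cos θ) (sin θ)‖ = 1 := by
  rw [← sq_eq_sq₀ (norm_nonneg _) zero_le_one, norm_e2_sq, cos_sq_add_sin_sq, one_pow]

lemma dist_add_smul_e2_cos_sin_sq (p : Pt 2) (a b α β : ℝ) :
    dist (p + a • e2 (cos α) (sin α)) (p + b • e2 (cos β) (sin β)) ^ 2
      = a ^ 2 + b ^ 2 - 2 * a * b * cos (α - β) := by
  have hsub : a • e2 (cos α) (sin α) - b • e2 (cos β) (sin β)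
      = e2 (a * cos α - b * cos β) (a * sin α - b * sin β) := by
    ext i; fin_cases i <;> simp [e2]
  rw [dist_eq_norm, add_sub_add_left_eq_sub, hsub, norm_e2_sq, cos_sub]
  linear_combination a ^ 2 * sin_sq_add_cos_sq α + b ^ 2 * sin_sq_add_cos_sq β

lemma cos_le_cos_of_le_of_le_two_pi_sub {c x : ℝ} (hc : 0 ≤ c) (hcx : c ≤ x)
    (hx : x ≤ 2 * π - c) : cos x ≤ cos c := by
  rcases le_total x π with hxπ | hπx
  · exact cos_le_cos_of_nonneg_of_le_pi hc hxπ hcx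
  · rw [← cos_two_pi_sub x]
    exact cos_le_cos_of_nonneg_of_le_pi hc (by linarith) (by linarith)

lemma cos_sub_two_pi_mul_div_le_cos_pi_div {m : ℕ} (hm : 0 < m) {k : ℤ} (hk : ¬ (m : ℤ) ∣ k)
    {δ : ℝ} (hδ₀ : 0 ≤ δ) (hδ : δ ≤ π / m) : cos (δ - 2 * π * k / m) ≤ cos (π / m) := by
  set k' := k % m
  have hk'₀ : (1 : ℝ) ≤ k' := by
    exact_mod_cast lt_of_le_of_ne (Int.emod_nonneg _ (by omega))
      (fun h => hk (Int.dvd_of_emod_eq_zero h.symm))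
  have hk'm : (k' : ℝ) + 1 ≤ m := by exact_mod_cast Int.emod_lt_of_pos k (by omega)
  have hreduce : δ - 2 * π * k / m = -(2 * π * k' / m - δ) - (k / m : ℤ) * (2 * π) := by
    have : (k : ℝ) = k' + m * (k / m : ℤ) := by exact_mod_cast (Int.emod_add_mul_ediv k m).symm
    rw [this]; field_simp; ring
  rw [hreduce, cos_sub_int_mul_two_pi, cos_neg]
  have hθ : 0 < π / m := by positivity
  have hk'θ : 2 * π * k' / m = 2 * (π / m) * k' := by ring
  have h2π : 2 * π = 2 * (π / m) * m := by field_simp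
  -- `1 ≤ k % m ≤ m - 1` puts the reduced angle in `[π / m, 2π - π / m]`.
  apply cos_le_cos_of_le_of_le_two_pi_sub hθ.le
  · nlinarith
  · nlinarith

lemma not_dvd_sub_of_mem_Icc {m j j₀ : ℕ} (hj : j ∈ Finset.Icc 1 m) (hj₀ : j₀ ∈ Finset.Icc 1 m)
    (hne : j ≠ j₀) : ¬ (m : ℤ) ∣ (j : ℤ) - j₀ := fun hdvd =>
  hne <| by
    simp only [Finset.mem_Icc] at hj hj₀
    have := Int.eq_zero_of_abs_lt_dvd hdvd (by rw [abs_lt]; omega)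
    omega

lemma exists_mem_Icc_mul_cos_eq {r r' θ : ℝ} (hr : 0 < r) (hrr' : r ≤ r') (hθ₀ : 0 ≤ θ)
    (hθπ : θ ≤ π) (hθ : r' * cos θ ≤ r) : ∃ δ ∈ Set.Icc 0 θ, r' * cos δ = r := by
  have hr' : 0 < r' := hr.trans_le hrr'
  refine ⟨arccos (r / r'), ⟨arccos_nonneg _, ?_⟩, ?_⟩
  · calc arccos (r / r') ≤ arccos (cos θ) := arccos_le_arccos ((le_div_iff₀ hr').2 (by linarith))
      _ = θ := arccos_cos hθ₀ hθπ
  · rw [cos_arccos (by linarith [div_pos hr hr']) ((div_le_one hr').2 hrr')]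
    field_simp

lemma mul_cos_pi_div_lt {m : ℕ} (hm : 2 < m) {r ε r' : ℝ}
    (hε : ε < r * (1 / cos (π / m) - 1)) (hr' : r' ≤ r + ε) : r' * cos (π / m) < r := by
  have hθ_lt : π / m < π / 2 := div_lt_div_of_pos_left pi_pos two_pos (by exact_mod_cast hm)
  have hθ : 0 < π / m := by positivity
  have hcos_pos : 0 < cos (π / m) := cos_pos_of_mem_Ioo ⟨by linarith [pi_div_two_pos], hθ_lt⟩
  calc r' * cos (π / m) ≤ (r + ε) * cos (π / m) := by gcongr
    _ < (r + r * (1 / cos (π / m) - 1)) * cos (π / m) := by gcongr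
    _ = r := by field_simp; ring

theorem first_vertex_choice_general (m : ℕ) (hm : 2 < m) (r ε : ℝ) (hr : 0 < r)
    (hε' : ε < r * (1 / Real.cos (π / m) - 1)) (p : Pt 2)
    (r' : ℝ) (hr'₁ : r ≤ r') (hr'₂ : r' ≤ r + ε)
    (j₀ : ℕ) (hj₀ : 1 ≤ j₀) (hj₀m : j₀ ≤ m) :
    ∃ q : Pt 2, dist q p = r' ∧
      dist q (p + (2 * r) • e2 (Real.cos (2 * π * j₀ / m)) (Real.sin (2 * π * j₀ / m))) = r' ∧
      ∀ j : ℕ, 1 ≤ j → j ≤ m → j ≠ j₀ →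
        r' < dist q (p + (2 * r) • e2 (Real.cos (2 * π * j / m)) (Real.sin (2 * π * j / m))) := by
  have hr' : 0 < r' := hr.trans_le hr'₁
  have hcos_lt : r' * cos (π / m) < r := mul_cos_pi_div_lt hm hε' hr'₂
  obtain ⟨δ, ⟨hδ₀, hδ_le⟩, hδ_cos⟩ := exists_mem_Icc_mul_cos_eq hr hr'₁ (by positivity)
    (div_le_self pi_pos.le (by exact_mod_cast (by omega : 1 ≤ m))) hcos_lt.le
  refine ⟨p + r' • e2 (cos (2 * π * j₀ / m + δ)) (sin (2 * π * j₀ / m + δ)), ?_, ?_, ?_⟩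
  · rw [dist_eq_norm, add_sub_cancel_left, norm_smul, norm_e2_cos_sin, norm_of_nonneg hr'.le,
      mul_one]
  · rw [← sq_eq_sq₀ dist_nonneg hr'.le, dist_add_smul_e2_cos_sin_sq, add_sub_cancel_left]
    linear_combination -4 * r * hδ_cos
  · intro j hj hjm hne
    have hcos : cos (δ - 2 * π * ((j : ℤ) - j₀ : ℤ) / m) ≤ cos (π / m) :=
      cos_sub_two_pi_mul_div_le_cos_pi_div (by omega)
        (not_dvd_sub_of_mem_Icc (Finset.mem_Icc.2 ⟨hj, hjm⟩) (Finset.mem_Icc.2 ⟨hj₀, hj₀m⟩) hne)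
        hδ₀ hδ_le
    have hangle : 2 * π * j₀ / m + δ - 2 * π * j / m = δ - 2 * π * ((j : ℤ) - j₀ : ℤ) / m := by
      push_cast; ring
    refine lt_of_pow_lt_pow_left₀ 2 dist_nonneg ?_
    rw [dist_add_smul_e2_cos_sin_sq, hangle]
    nlinarith [mul_le_mul_of_nonneg_left hcos (by positivity : 0 ≤ r * r')]

/-- one can choose a point `q` at distance exactly `r'` from both
the center `p` and one chosen point `a_{j₀}` of `m` points evenly distributed
on the circle of radius `2r` around `p`, with all other points strictly
farther than `r'`. -/
theorem first_vertex_choice (m : ℕ) (hm : 2 < m) (r ε : ℝ) (hr : 0 < r)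
    (hε : 0 < ε) (hε' : ε < r * (1 / Real.cos (π / m) - 1)) (p : Pt 2)
    (r' : ℝ) (hr'₁ : r ≤ r') (hr'₂ : r' ≤ r + ε)
    (j₀ : ℕ) (hj₀ : 1 ≤ j₀) (hj₀m : j₀ ≤ m) :
    ∃ q : Pt 2, dist q p = r' ∧
      dist q (p + (2 * r) • e2 (Real.cos (2 * π * j₀ / m)) (Real.sin (2 * π * j₀ / m))) = r' ∧
      ∀ j : ℕ, 1 ≤ j → j ≤ m → j ≠ j₀ →
        r' < dist q (p + (2 * r) • e2 (Real.cos (2 * π * j / m)) (Real.sin (2 * π * j / m))) :=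
  first_vertex_choice_general m hm r ε hr hε' p r' hr'₁ hr'₂ j₀ hj₀ hj₀m
end
end

section
/- Let p ∈ ℝ² and r > 0. Let a, b, c be three points evenly distributed on the circle of radius r around p (at angles 120° apart), and for 0 ≤ ε sufficiently small let a', b', c' be points obtained by moving a, b, c radially outward from p by distances at most ε each. Then the circumcircle of a', b', c' has radius r' with r ≤ r' ≤ r + ε and contains the point p in its closed disk. -/
open Real

noncomputable section

set_option maxHeartbeats 1000000

section ScalarAux
variable (r ε R1 R2 R3 : ℝ)

lemma xsq_bound (den X d S2 S3 E : ℝ) (hr : 0 < r) (hε : 0 ≤ ε) (hE : 0 ≤ E)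
    (hden : 3*r^2 ≤ den)
    (hX : X * (2*den) = (S2+S3)*d)
    (h2l : r ≤ S2) (h2u : S2 ≤ r + ε) (h3l : r ≤ S3) (h3u : S3 ≤ r + ε)
    (hεrr : ε ≤ r)
    (hdl : -(3*r*ε) ≤ d) (hdu : d ≤ 3*r*ε) (hDl : -(4*r*E) ≤ d) (hDu : d ≤ 4*r*E) :
    X^2 ≤ (16/3)*ε*E := by
  have hdsq : d^2 ≤ 12*r^2*ε*E := by
    nlinarith [mul_nonneg (by linarith : (0:ℝ) ≤ 3*r*ε - d) (by linarith : (0:ℝ) ≤ 4*r*E + d),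
      mul_nonneg (by linarith : (0:ℝ) ≤ 3*r*ε + d) (by linarith : (0:ℝ) ≤ 4*r*E - d)]
  have hA2 : X^2 * (2*den)^2 ≤ 192*r^4*ε*E := by
    have h1 : X^2 * (2*den)^2 = (S2+S3)^2 * d^2 := by
      calc X^2 * (2*den)^2 = (X * (2*den))^2 := by ring
        _ = ((S2+S3)*d)^2 := by rw [hX]
        _ = (S2+S3)^2 * d^2 := by ring
    rw [h1]
    calc (S2+S3)^2 * d^2 ≤ (4*r)^2 * d^2 := by
          apply mul_le_mul_of_nonneg_right _ (sq_nonneg d)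
          nlinarith
      _ ≤ (4*r)^2 * (12*r^2*ε*E) := mul_le_mul_of_nonneg_left hdsq (by positivity)
      _ = 192*r^4*ε*E := by ring
  nlinarith [hA2, mul_nonneg (sq_nonneg X) (show (0:ℝ) ≤ (2*den)^2 - 36*r^4 by nlinarith),
    pow_pos hr 4]



lemma dbound (hr : 0 < r) (hε : 0 ≤ ε) (hεrr : ε ≤ r)
    (hR1l : r ≤ R1) (hR1u : R1 ≤ r + ε) (hR2l : r ≤ R2) (hR2u : R2 ≤ r + ε)
    (hR3l : r ≤ R3) (hR3u : R3 ≤ r + ε) :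
    -(3*r*ε) ≤ R1^2 - R2*R3 ∧ R1^2 - R2*R3 ≤ 3*r*ε ∧
    -(4*r*((r+ε-R1)+(r+ε-R2)+(r+ε-R3))) ≤ R1^2 - R2*R3 ∧
    R1^2 - R2*R3 ≤ 4*r*((r+ε-R1)+(r+ε-R2)+(r+ε-R3)) := by
  refine ⟨by nlinarith, by nlinarith, ?_, ?_⟩
  · nlinarith [mul_nonneg (show (0:ℝ) ≤ r+ε-R1 by linarith) (show (0:ℝ) ≤ 4*r - (r+ε+R1) by linarith),
      mul_nonneg (show (0:ℝ) ≤ r+ε-R2 by linarith) (show (0:ℝ) ≤ r + ε by linarith),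
      mul_nonneg (show (0:ℝ) ≤ r+ε-R3 by linarith) (show (0:ℝ) ≤ R2 by linarith),
      mul_nonneg (show (0:ℝ) ≤ r+ε-R2 by linarith) hr.le,
      mul_nonneg (show (0:ℝ) ≤ r+ε-R3 by linarith) hr.le]
  · nlinarith [mul_nonneg (show (0:ℝ) ≤ r+ε-R1 by linarith) (show (0:ℝ) ≤ r+ε+R1 by linarith),
      mul_nonneg (show (0:ℝ) ≤ r+ε-R2 by linarith) (show (0:ℝ) ≤ 2*r - (r+ε) by linarith),
      mul_nonneg (show (0:ℝ) ≤ r+ε-R3 by linarith) (show (0:ℝ) ≤ 2*r - R2 by linarith),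
      mul_nonneg (show (0:ℝ) ≤ r+ε-R1 by linarith) hr.le,
      mul_nonneg (show (0:ℝ) ≤ r+ε-R2 by linarith) (show (0:ℝ) ≤ r + ε by linarith),
      mul_nonneg (show (0:ℝ) ≤ r+ε-R3 by linarith) (show (0:ℝ) ≤ R2 by linarith)]



lemma gap2_lemma (C : ℝ) (hr : 0 < r) (hε : 0 ≤ ε) (hεrr : ε ≤ r)
    (hR1l : r ≤ R1) (hR1u : R1 ≤ r + ε) (hR2l : r ≤ R2) (hR2u : R2 ≤ r + ε)
    (hR3l : r ≤ R3) (hR3u : R3 ≤ r + ε)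
    (hCden : C * (R1*R2 + R1*R3 + R2*R3) = (R1+R2+R3)*(R1*R2*R3)) :
    r*((r+ε-R1)+(r+ε-R2)+(r+ε-R3))/6 ≤ (r+ε)^2 - C := by
  set E := (r+ε-R1)+(r+ε-R2)+(r+ε-R3) with hE_def
  have hE : 0 ≤ E := by simp only [hE_def]; linarith
  clear_value E
  set den := R1*R2 + R1*R3 + R2*R3 with hden_def
  have hden : 0 < den := by nlinarith
  clear_value den
  have hgap : ((r+ε)^2 - C) * den =
      (R2*R3)*((r+ε)^2 - R1^2) + (R1*R3)*((r+ε)^2 - R2^2) + (R1*R2)*((r+ε)^2 - R3^2) := by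
    linear_combination -hCden + (r+ε)^2 * hden_def
  have hterm1 : 2*r^3*(r+ε-R1) ≤ (R2*R3)*((r+ε)^2 - R1^2) := by
    have hg : 2*r*(r+ε-R1) ≤ (r+ε)^2 - R1^2 := by
      nlinarith [mul_nonneg (show (0:ℝ) ≤ r+ε-R1 by linarith) (show (0:ℝ) ≤ R1 - r by linarith)]
    have hA : r^2 ≤ R2*R3 := by nlinarith
    have hg0 : 0 ≤ (r+ε)^2 - R1^2 := by nlinarith [mul_nonneg hr.le (show (0:ℝ) ≤ r+ε-R1 by linarith)]
    calc 2*r^3*(r+ε-R1) = r^2 * (2*r*(r+ε-R1)) := by ring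
      _ ≤ r^2 * ((r+ε)^2 - R1^2) := mul_le_mul_of_nonneg_left hg (by positivity)
      _ ≤ (R2*R3) * ((r+ε)^2 - R1^2) := mul_le_mul_of_nonneg_right hA hg0
  have hterm2 : 2*r^3*(r+ε-R2) ≤ (R1*R3)*((r+ε)^2 - R2^2) := by
    have hg : 2*r*(r+ε-R2) ≤ (r+ε)^2 - R2^2 := by
      nlinarith [mul_nonneg (show (0:ℝ) ≤ r+ε-R2 by linarith) (show (0:ℝ) ≤ R2 - r by linarith)]
    have hA : r^2 ≤ R1*R3 := by nlinarith
    have hg0 : 0 ≤ (r+ε)^2 - R2^2 := by nlinarith [mul_nonneg hr.le (show (0:ℝ) ≤ r+ε-R2 by linarith)]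
    calc 2*r^3*(r+ε-R2) = r^2 * (2*r*(r+ε-R2)) := by ring
      _ ≤ r^2 * ((r+ε)^2 - R2^2) := mul_le_mul_of_nonneg_left hg (by positivity)
      _ ≤ (R1*R3) * ((r+ε)^2 - R2^2) := mul_le_mul_of_nonneg_right hA hg0
  have hterm3 : 2*r^3*(r+ε-R3) ≤ (R1*R2)*((r+ε)^2 - R3^2) := by
    have hg : 2*r*(r+ε-R3) ≤ (r+ε)^2 - R3^2 := by
      nlinarith [mul_nonneg (show (0:ℝ) ≤ r+ε-R3 by linarith) (show (0:ℝ) ≤ R3 - r by linarith)]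
    have hA : r^2 ≤ R1*R2 := by nlinarith
    have hg0 : 0 ≤ (r+ε)^2 - R3^2 := by nlinarith [mul_nonneg hr.le (show (0:ℝ) ≤ r+ε-R3 by linarith)]
    calc 2*r^3*(r+ε-R3) = r^2 * (2*r*(r+ε-R3)) := by ring
      _ ≤ r^2 * ((r+ε)^2 - R3^2) := mul_le_mul_of_nonneg_left hg (by positivity)
      _ ≤ (R1*R2) * ((r+ε)^2 - R3^2) := mul_le_mul_of_nonneg_right hA hg0
  have hgaplb : 2*r^3*E ≤ ((r+ε)^2 - C) * den := by
    rw [hgap]; simp only [hE_def]; linarith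
  have hdenub : den ≤ 12*r^2 := by rw [hden_def]; nlinarith
  have hprod : 0 ≤ (r*E/6) * (12*r^2 - den) :=
    mul_nonneg (by positivity) (by linarith)
  have h2 : (r*E/6)*den ≤ 2*r^3*E := by nlinarith [hprod]
  have key : 0 ≤ ((r+ε)^2 - C - r*E/6) * den := by nlinarith [hgaplb, h2]
  nlinarith [key, hden]


lemma scalar_main (r ε R1 R2 R3 : ℝ) (hr : 0 < r) (hε : 0 ≤ ε) (hεr : ε ≤ r/64)
    (hR1l : r ≤ R1) (hR1u : R1 ≤ r + ε) (hR2l : r ≤ R2) (hR2u : R2 ≤ r + ε)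
    (hR3l : r ≤ R3) (hR3u : R3 ≤ r + ε) :
    ∃ C x1 x2 x3 : ℝ,
      R1^2 - 2*R1*x1 = C ∧ R2^2 - 2*R2*x2 = C ∧ R3^2 - 2*R3*x3 = C ∧
      x1 + x2 + x3 = 0 ∧ r^2 ≤ C ∧
      (2/3)*(x1^2+x2^2+x3^2) + C ≤ (r+ε)^2 := by
  have hεrr : ε ≤ r := by linarith
  have hR1p : 0 < R1 := lt_of_lt_of_le hr hR1l
  have hR2p : 0 < R2 := lt_of_lt_of_le hr hR2l
  have hR3p : 0 < R3 := lt_of_lt_of_le hr hR3l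
  obtain ⟨den, hden_def⟩ : ∃ d : ℝ, d = R1*R2 + R1*R3 + R2*R3 := ⟨_, rfl⟩
  have hden : 0 < den := by rw [hden_def]; positivity
  have hden3 : 3*r^2 ≤ den := by rw [hden_def]; nlinarith
  obtain ⟨C, hC_def⟩ : ∃ c : ℝ, c = ((R1+R2+R3)*(R1*R2*R3))/den := ⟨_, rfl⟩
  have hCden : C * den = (R1+R2+R3)*(R1*R2*R3) := by
    rw [hC_def]; exact div_mul_cancel₀ _ hden.ne'
  obtain ⟨x1, hx1_def⟩ : ∃ x : ℝ, x = (R1^2 - C)/(2*R1) := ⟨_, rfl⟩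
  obtain ⟨x2, hx2_def⟩ : ∃ x : ℝ, x = (R2^2 - C)/(2*R2) := ⟨_, rfl⟩
  obtain ⟨x3, hx3_def⟩ : ∃ x : ℝ, x = (R3^2 - C)/(2*R3) := ⟨_, rfl⟩
  have hx1R : x1 * (2*R1) = R1^2 - C := by rw [hx1_def]; exact div_mul_cancel₀ _ (by positivity)
  have hx2R : x2 * (2*R2) = R2^2 - C := by rw [hx2_def]; exact div_mul_cancel₀ _ (by positivity)
  have hx3R : x3 * (2*R3) = R3^2 - C := by rw [hx3_def]; exact div_mul_cancel₀ _ (by positivity)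
  have hx1den : x1 * (2*den) = (R2+R3)*(R1^2 - R2*R3) := by
    have h : x1 * (2*den) * R1 = ((R2+R3)*(R1^2 - R2*R3)) * R1 := by
      linear_combination den * hx1R - hCden + R1^2 * hden_def
    exact mul_right_cancel₀ hR1p.ne' h
  have hx2den : x2 * (2*den) = (R1+R3)*(R2^2 - R1*R3) := by
    have h : x2 * (2*den) * R2 = ((R1+R3)*(R2^2 - R1*R3)) * R2 := by
      linear_combination den * hx2R - hCden + R2^2 * hden_def
    exact mul_right_cancel₀ hR2p.ne' h
  have hx3den : x3 * (2*den) = (R1+R2)*(R3^2 - R1*R2) := by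
    have h : x3 * (2*den) * R3 = ((R1+R2)*(R3^2 - R1*R2)) * R3 := by
      linear_combination den * hx3R - hCden + R3^2 * hden_def
    exact mul_right_cancel₀ hR3p.ne' h
  have hsum : x1 + x2 + x3 = 0 := by
    have h : (x1 + x2 + x3) * (2*den) = 0 * (2*den) := by
      linear_combination hx1den + hx2den + hx3den
    exact mul_right_cancel₀ (by positivity) h
  have hClb : r^2 ≤ C := by
    have h : (C - r^2) * den =
        (R2*R3)*(R1^2 - r^2) + (R1*R3)*(R2^2 - r^2) + (R1*R2)*(R3^2 - r^2) := by
      linear_combination hCden - r^2 * hden_def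
    have h1 : 0 ≤ (R2*R3)*(R1^2 - r^2) := mul_nonneg (by positivity) (by nlinarith)
    have h2 : 0 ≤ (R1*R3)*(R2^2 - r^2) := mul_nonneg (by positivity) (by nlinarith)
    have h3 : 0 ≤ (R1*R2)*(R3^2 - r^2) := mul_nonneg (by positivity) (by nlinarith)
    have hnn : 0 ≤ (C - r^2) * den := by rw [h]; linarith
    nlinarith [hnn, hden]
  obtain ⟨E, hE_def⟩ : ∃ e : ℝ, e = (r+ε-R1)+(r+ε-R2)+(r+ε-R3) := ⟨_, rfl⟩
  have hE : 0 ≤ E := by rw [hE_def]; linarith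
  obtain ⟨hd1l, hd1u, hd1El, hd1Eu⟩ := dbound r ε R1 R2 R3 hr hε hεrr hR1l hR1u hR2l hR2u hR3l hR3u
  obtain ⟨hd2l, hd2u, hd2El, hd2Eu⟩ := dbound r ε R2 R1 R3 hr hε hεrr hR2l hR2u hR1l hR1u hR3l hR3u
  obtain ⟨hd3l, hd3u, hd3El, hd3Eu⟩ := dbound r ε R3 R1 R2 hr hε hεrr hR3l hR3u hR1l hR1u hR2l hR2u
  have hE2 : (r+ε-R2)+(r+ε-R1)+(r+ε-R3) = (r+ε-R1)+(r+ε-R2)+(r+ε-R3) := by ring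
  have hE3 : (r+ε-R3)+(r+ε-R1)+(r+ε-R2) = (r+ε-R1)+(r+ε-R2)+(r+ε-R3) := by ring
  rw [hE2] at hd2El hd2Eu
  rw [hE3] at hd3El hd3Eu
  rw [← hE_def] at hd1El hd1Eu hd2El hd2Eu hd3El hd3Eu
  have hx1sq := xsq_bound r ε den x1 (R1^2 - R2*R3) R2 R3 E hr hε hE hden3 hx1den
    hR2l hR2u hR3l hR3u hεrr hd1l hd1u hd1El hd1Eu
  have hx2sq := xsq_bound r ε den x2 (R2^2 - R1*R3) R1 R3 E hr hε hE hden3 hx2den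
    hR1l hR1u hR3l hR3u hεrr hd2l hd2u hd2El hd2Eu
  have hx3sq := xsq_bound r ε den x3 (R3^2 - R1*R2) R1 R2 E hr hε hE hden3 hx3den
    hR1l hR1u hR2l hR2u hεrr hd3l hd3u hd3El hd3Eu
  have hCden' : C * (R1*R2 + R1*R3 + R2*R3) = (R1+R2+R3)*(R1*R2*R3) := by
    rw [← hden_def]; exact hCden
  have hgap2 := gap2_lemma r ε R1 R2 R3 C hr hε hεrr hR1l hR1u hR2l hR2u hR3l hR3u hCden'
  rw [← hE_def] at hgap2
  have hfin : (2/3)*(x1^2+x2^2+x3^2) ≤ r*E/6 := by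
    linarith [hx1sq, hx2sq, hx3sq, mul_nonneg (show (0:ℝ) ≤ r/64 - ε by linarith) hE]
  exact ⟨C, x1, x2, x3, by linear_combination -hx1R, by linear_combination -hx2R,
    by linear_combination -hx3R, hsum, hClb, by linarith⟩

end ScalarAux

lemma geom_key (cs sn k x1 x2 x3 C R1 R2 R3 a1 a2 wx wy c2 s2 c3 s3 : ℝ)
    (hpyth : cs^2 + sn^2 = 1) (hk : k^2 = 3)
    (hsum : x1 + x2 + x3 = 0)
    (hC1 : R1^2 - 2*R1*x1 = C) (hC2 : R2^2 - 2*R2*x2 = C) (hC3 : R3^2 - 2*R3*x3 = C)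
    (ha1 : a1 = (4/3)*(x1 + x2/2)) (ha2 : a2 = (4/3)*(x1/2 + x2))
    (hc2 : c2 = cs*(-(1/2)) - sn*(k/2)) (hs2 : s2 = sn*(-(1/2)) + cs*(k/2))
    (hc3 : c3 = cs*(-(1/2)) + sn*(k/2)) (hs3 : s3 = sn*(-(1/2)) - cs*(k/2))
    (hwx : wx = a1*cs + a2*c2) (hwy : wy = a1*sn + a2*s2) :
    (wx - R1*cs)^2 + (wy - R1*sn)^2 = wx^2 + wy^2 + C ∧
    (wx - R2*c2)^2 + (wy - R2*s2)^2 = wx^2 + wy^2 + C ∧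
    (wx - R3*c3)^2 + (wy - R3*s3)^2 = wx^2 + wy^2 + C ∧
    wx^2 + wy^2 = (2/3)*(x1^2 + x2^2 + x3^2) := by
  subst ha1 ha2 hc2 hs2 hc3 hs3 hwx hwy
  refine ⟨?_, ?_, ?_, ?_⟩
  · linear_combination hC1 + (R1^2 - 2*R1*x1) * hpyth
  · linear_combination hC2 + (R2^2 - 2*R2*x2) * hpyth +
      ((cs^2+sn^2) * (R2^2 - 2*R2*((4/3)*(x1/2 + x2)))/4) * hk
  · linear_combination hC3 + (R3^2 - 2*R3*x3) * hpyth + 2*R3*(cs^2+sn^2) * hsum +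
      ((cs^2+sn^2) * (R3^2 + 2*R3*((4/3)*(x1/2 + x2)))/4) * hk
  · linear_combination (((4/3)*(x1 + x2/2))^2 - ((4/3)*(x1 + x2/2))*((4/3)*(x1/2 + x2)) +
      ((4/3)*(x1/2 + x2))^2) * hpyth +
      ((cs^2+sn^2) * ((4/3)*(x1/2 + x2))^2/4) * hk - (2/3)*(x3 - x1 - x2)*hsum

/-- perturbing three points at angles 120° apart on the circle of
radius `r` around `p` radially outward by at most a sufficiently small `ε`
yields a circumcircle of radius `r' ∈ [r, r + ε]` whose closed disk contains
`p`. -/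
theorem circumcircle_perturbation (p : Pt 2) (r : ℝ) (hr : 0 < r) (θ : ℝ) :
    ∃ ε₀ > 0, ∀ ε : ℝ, 0 ≤ ε → ε ≤ ε₀ →
      ∀ s t u : ℝ, 0 ≤ s → s ≤ ε → 0 ≤ t → t ≤ ε → 0 ≤ u → u ≤ ε →
        ∃ q : Pt 2, ∃ r' : ℝ,
          dist q (p + (r + s) • e2 (Real.cos θ) (Real.sin θ)) = r' ∧
          dist q (p + (r + t) • e2 (Real.cos (θ + 2 * π / 3)) (Real.sin (θ + 2 * π / 3))) = r' ∧
          dist q (p + (r + u) • e2 (Real.cos (θ + 4 * π / 3)) (Real.sin (θ + 4 * π / 3))) = r' ∧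
          r ≤ r' ∧ r' ≤ r + ε ∧ dist q p ≤ r' := by
  refine ⟨r/64, by positivity, ?_⟩
  intro ε hε hεr s t u hs hsε ht htε hu huε
  obtain ⟨C, x1, x2, x3, hC1, hC2, hC3, hsum, hClb, hW⟩ :=
    scalar_main r ε (r+s) (r+t) (r+u) hr hε hεr (by linarith) (by linarith)
      (by linarith) (by linarith) (by linarith) (by linarith)
  set k := Real.sqrt 3 with hk_def
  have hk : k^2 = 3 := Real.sq_sqrt (by norm_num)
  have hcos23 : Real.cos (2*π/3) = -(1/2) := by
    have h : (2*π/3) = π - π/3 := by ring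
    rw [h, Real.cos_pi_sub, Real.cos_pi_div_three]
  have hsin23 : Real.sin (2*π/3) = k/2 := by
    have h : (2*π/3) = π - π/3 := by ring
    rw [h, Real.sin_pi_sub, Real.sin_pi_div_three, hk_def]
  have hcos43 : Real.cos (4*π/3) = -(1/2) := by
    have h : (4*π/3) = π + π/3 := by ring
    rw [h, Real.cos_add, Real.cos_pi, Real.sin_pi, Real.cos_pi_div_three]; ring
  have hsin43 : Real.sin (4*π/3) = -(k/2) := by
    have h : (4*π/3) = π + π/3 := by ring
    rw [h, Real.sin_add, Real.cos_pi, Real.sin_pi, Real.sin_pi_div_three, hk_def]; ring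
  set cs := Real.cos θ with hcs_def
  set sn := Real.sin θ with hsn_def
  have hpyth : cs^2 + sn^2 = 1 := Real.cos_sq_add_sin_sq θ
  have hc2 : Real.cos (θ + 2*π/3) = cs*(-(1/2)) - sn*(k/2) := by
    rw [Real.cos_add, hcos23, hsin23]
  have hs2 : Real.sin (θ + 2*π/3) = sn*(-(1/2)) + cs*(k/2) := by
    rw [Real.sin_add, hcos23, hsin23]
  have hc3 : Real.cos (θ + 4*π/3) = cs*(-(1/2)) + sn*(k/2) := by
    rw [Real.cos_add, hcos43, hsin43]; ring
  have hs3 : Real.sin (θ + 4*π/3) = sn*(-(1/2)) - cs*(k/2) := by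
    rw [Real.sin_add, hcos43, hsin43]; ring
  obtain ⟨a1, ha1⟩ : ∃ a : ℝ, a = (4/3)*(x1 + x2/2) := ⟨_, rfl⟩
  obtain ⟨a2, ha2⟩ : ∃ a : ℝ, a = (4/3)*(x1/2 + x2) := ⟨_, rfl⟩
  obtain ⟨wx, hwx⟩ : ∃ w : ℝ, w = a1*cs + a2*(cs*(-(1/2)) - sn*(k/2)) := ⟨_, rfl⟩
  obtain ⟨wy, hwy⟩ : ∃ w : ℝ, w = a1*sn + a2*(sn*(-(1/2)) + cs*(k/2)) := ⟨_, rfl⟩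
  obtain ⟨key1, key2, key3, key4⟩ := geom_key cs sn k x1 x2 x3 C (r+s) (r+t) (r+u) a1 a2 wx wy
    (cs*(-(1/2)) - sn*(k/2)) (sn*(-(1/2)) + cs*(k/2)) (cs*(-(1/2)) + sn*(k/2)) (sn*(-(1/2)) - cs*(k/2))
    hpyth hk hsum hC1 hC2 hC3 ha1 ha2 rfl rfl rfl rfl hwx hwy
  have hCpos : (0:ℝ) ≤ C := le_trans (sq_nonneg r) hClb
  have harg : (0:ℝ) ≤ wx^2 + wy^2 + C := by positivity
  refine ⟨p + e2 wx wy, Real.sqrt (wx^2 + wy^2 + C), ?_, ?_, ?_, ?_, ?_, ?_⟩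
  · rw [dist_add_left, dist_eq_norm,
      show e2 wx wy - (r+s) • e2 cs sn = e2 (wx - (r+s)*cs) (wy - (r+s)*sn) by
        ext i; fin_cases i <;> simp [e2],
      EuclideanSpace.norm_eq]
    simp only [e2, Fin.sum_univ_two, Real.norm_eq_abs, sq_abs]
    rw [show ((WithLp.equiv 2 (Fin 2 → ℝ)).symm ![wx - (r+s)*cs, wy - (r+s)*sn]) 0 = wx - (r+s)*cs from rfl,
      show ((WithLp.equiv 2 (Fin 2 → ℝ)).symm ![wx - (r+s)*cs, wy - (r+s)*sn]) 1 = wy - (r+s)*sn from rfl,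
      key1]
  · rw [hc2, hs2, dist_add_left, dist_eq_norm,
      show e2 wx wy - (r+t) • e2 (cs*(-(1/2)) - sn*(k/2)) (sn*(-(1/2)) + cs*(k/2)) =
        e2 (wx - (r+t)*(cs*(-(1/2)) - sn*(k/2))) (wy - (r+t)*(sn*(-(1/2)) + cs*(k/2))) by
        ext i; fin_cases i <;> simp [e2],
      EuclideanSpace.norm_eq]
    simp only [e2, Fin.sum_univ_two, Real.norm_eq_abs, sq_abs]
    rw [show ((WithLp.equiv 2 (Fin 2 → ℝ)).symm ![wx - (r+t)*(cs*(-(1/2)) - sn*(k/2)), wy - (r+t)*(sn*(-(1/2)) + cs*(k/2))]) 0 = wx - (r+t)*(cs*(-(1/2)) - sn*(k/2)) from rfl,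
      show ((WithLp.equiv 2 (Fin 2 → ℝ)).symm ![wx - (r+t)*(cs*(-(1/2)) - sn*(k/2)), wy - (r+t)*(sn*(-(1/2)) + cs*(k/2))]) 1 = wy - (r+t)*(sn*(-(1/2)) + cs*(k/2)) from rfl,
      key2]
  · rw [hc3, hs3, dist_add_left, dist_eq_norm,
      show e2 wx wy - (r+u) • e2 (cs*(-(1/2)) + sn*(k/2)) (sn*(-(1/2)) - cs*(k/2)) =
        e2 (wx - (r+u)*(cs*(-(1/2)) + sn*(k/2))) (wy - (r+u)*(sn*(-(1/2)) - cs*(k/2))) by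
        ext i; fin_cases i <;> simp [e2],
      EuclideanSpace.norm_eq]
    simp only [e2, Fin.sum_univ_two, Real.norm_eq_abs, sq_abs]
    rw [show ((WithLp.equiv 2 (Fin 2 → ℝ)).symm ![wx - (r+u)*(cs*(-(1/2)) + sn*(k/2)), wy - (r+u)*(sn*(-(1/2)) - cs*(k/2))]) 0 = wx - (r+u)*(cs*(-(1/2)) + sn*(k/2)) from rfl,
      show ((WithLp.equiv 2 (Fin 2 → ℝ)).symm ![wx - (r+u)*(cs*(-(1/2)) + sn*(k/2)), wy - (r+u)*(sn*(-(1/2)) - cs*(k/2))]) 1 = wy - (r+u)*(sn*(-(1/2)) - cs*(k/2)) from rfl,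
      key3]
  · calc r = Real.sqrt (r^2) := (Real.sqrt_sq hr.le).symm
      _ ≤ Real.sqrt (wx^2 + wy^2 + C) := Real.sqrt_le_sqrt (by linarith [hClb, sq_nonneg wx, sq_nonneg wy])
  · calc Real.sqrt (wx^2 + wy^2 + C) ≤ Real.sqrt ((r+ε)^2) :=
        Real.sqrt_le_sqrt (by linarith [key4, hW])
      _ = r + ε := Real.sqrt_sq (by linarith)
  · have h1 : dist (p + e2 wx wy) p = ‖e2 wx wy‖ := by simp [dist_eq_norm]
    rw [h1, EuclideanSpace.norm_eq]
    simp only [e2, Fin.sum_univ_two, Real.norm_eq_abs, sq_abs]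
    rw [show ((WithLp.equiv 2 (Fin 2 → ℝ)).symm ![wx, wy]) 0 = wx from rfl,
      show ((WithLp.equiv 2 (Fin 2 → ℝ)).symm ![wx, wy]) 1 = wy from rfl]
    exact Real.sqrt_le_sqrt (by linarith)
end
end

section
/- Let p ∈ ℝ², r > 0, and 0 < δ ≤ (√2 − 1)r. Let a = p + (r,0) and b = p + (0,r), and let a' = p + (r + s, 0), b' = p + (0, r + t) for some 0 ≤ s, t ≤ δ. Then among the two circles of radius r' := r + ε (with circumradius parameters consistent, r ≤ r' ≤ r + δ) passing through a' and b', the one whose center q is on the same side as p satisfies ‖q − p‖ ≤ r'. -/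
open Real

noncomputable section

/-! The center of a circle of radius `ρ` through `(R, 0)` and `(0, T)` lies on the perpendicular
bisector of the chord, `(R/2 - lT, T/2 - lR)` with `(1/4 + l²)(R² + T²) = ρ²`. Taking `l ≥ 0`
puts the center on the side of the origin, and then its squared distance from the origin is
`ρ² - 2lRT ≤ ρ²`. -/

lemma exists_center_through_axis_points_near_origin {R T ρ : ℝ} (hRT : 0 ≤ R * T)
    (hRT₀ : 0 < R ^ 2 + T ^ 2) (hρ : R ^ 2 + T ^ 2 ≤ 4 * ρ ^ 2) :
    ∃ x y : ℝ, (x - R) ^ 2 + y ^ 2 = ρ ^ 2 ∧ x ^ 2 + (y - T) ^ 2 = ρ ^ 2 ∧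
      x ^ 2 + y ^ 2 ≤ ρ ^ 2 := by
  have hρL : 0 ≤ ρ ^ 2 / (R ^ 2 + T ^ 2) - 1 / 4 := by
    rw [sub_nonneg, le_div_iff₀ hRT₀]; linarith
  set l := √(ρ ^ 2 / (R ^ 2 + T ^ 2) - 1 / 4)
  have hl : (1 / 4 + l ^ 2) * (R ^ 2 + T ^ 2) = ρ ^ 2 := by
    rw [sq_sqrt hρL]; field_simp; ring
  refine ⟨R / 2 - l * T, T / 2 - l * R, by linear_combination hl, by linear_combination hl, ?_⟩
  have hq : (R / 2 - l * T) ^ 2 + (T / 2 - l * R) ^ 2 = ρ ^ 2 - 2 * l * (R * T) := by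
    linear_combination hl
  linarith [mul_nonneg (sqrt_nonneg _ : 0 ≤ l) hRT]

lemma dist_add_e2_add_e2 (p : Pt 2) (x y x' y' : ℝ) :
    dist (p + e2 x y) (p + e2 x' y') = √((x - x') ^ 2 + (y - y') ^ 2) := by
  rw [dist_add_left, EuclideanSpace.dist_eq, Fin.sum_univ_two]
  simp [e2, Real.dist_eq, sq_abs]

lemma dist_add_e2_self (p : Pt 2) (x y : ℝ) : dist (p + e2 x y) p = √(x ^ 2 + y ^ 2) := by
  rw [dist_eq_norm, add_sub_cancel_left, EuclideanSpace.norm_eq, Fin.sum_univ_two]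
  simp [e2, sq_abs]

theorem two_axes_circle_general (p : Pt 2) (r s t r' : ℝ) (hr : 0 < r)
    (hs : 0 ≤ s) (ht : 0 ≤ t)
    (hr' : max (dist (p + e2 (r + s) 0) p) (dist (p + e2 0 (r + t)) p) ≤ r') :
    ∃ q : Pt 2, dist q (p + e2 (r + s) 0) = r' ∧
      dist q (p + e2 0 (r + t)) = r' ∧ dist q p ≤ r' := by
  have hR : 0 < r + s := by linarith
  have hT : 0 < r + t := by linarith
  simp only [dist_add_e2_self, zero_pow two_ne_zero, add_zero, zero_add, sqrt_sq hR.le,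
    sqrt_sq hT.le, max_le_iff] at hr'
  have hr'₀ : 0 ≤ r' := hR.le.trans hr'.1
  obtain ⟨x, y, hxa, hxb, hxp⟩ := exists_center_through_axis_points_near_origin (ρ := r')
    (mul_nonneg hR.le hT.le) (by positivity) (by nlinarith)
  refine ⟨p + e2 x y, ?_, ?_, ?_⟩
  · rw [dist_add_e2_add_e2, sub_zero, hxa, sqrt_sq hr'₀]
  · rw [dist_add_e2_add_e2, sub_zero, hxb, sqrt_sq hr'₀]
  · rw [dist_add_e2_self, sqrt_le_left hr'₀]
    exact hxp

/-- if `a'` and `b'` lie on the two positive coordinate axes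
through `p` at distances in `[r, r + δ]` from `p`, with `δ ≤ (√2 - 1) r`, and
`r'` is at least these distances, then there is a center `q` at distance `r'`
from both `a'` and `b'` with `‖q - p‖ ≤ r'`. -/
theorem two_axes_circle (p : Pt 2) (r δ s t r' : ℝ) (hr : 0 < r)
    (hδ : 0 < δ) (hδ' : δ ≤ (Real.sqrt 2 - 1) * r)
    (hs : 0 ≤ s) (hs' : s ≤ δ) (ht : 0 ≤ t) (ht' : t ≤ δ)
    (hr' : max (dist (p + e2 (r + s) 0) p) (dist (p + e2 0 (r + t)) p) ≤ r') :
    ∃ q : Pt 2, dist q (p + e2 (r + s) 0) = r' ∧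
      dist q (p + e2 0 (r + t)) = r' ∧ dist q p ≤ r' :=
  two_axes_circle_general p r s t r' hr hs ht hr'
end
end
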